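/- Let $A$ be an algebra over a field $k$, $C$ a coalgebra over $k$, $I$ a two-sided ideal of $A$, and suppose $A$ carries a left module structure over a Hopf algebra $H$ making it an $H$-module algebra, with $C$ a subcoalgebra of $H$. Define $\theta: A \to \operatorname{Hom}_k(C, A/I)$ by $\theta_a(c) = S(c)a + I$, where the target carries the multiplication $(\xi \times \eta)(c) = \sum \xi(c_{(2)})\eta(c_{(1)})$ (convolution with respect to the opposite comultiplication). Then $\theta$ is a homomorphism of unital algebras with kernel $\{a \in A \mid S(C)a \subseteq I\}$. -/
import Mathlib

open TensorProduct

section ConvAux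
open Coalgebra HopfAlgebra

variable {R H B : Type*} [CommSemiring R] [Semiring H] [HopfAlgebra R H]
  [Semiring B] [Algebra R B]

noncomputable def myconv (f g : H →ₗ[R] B) : H →ₗ[R] B :=
  LinearMap.mul' R B ∘ₗ TensorProduct.map f g ∘ₗ comul

noncomputable def myunit : H →ₗ[R] B := Algebra.linearMap R B ∘ₗ counit

lemma pure_assoc (f g h : H →ₗ[R] B) :
    LinearMap.mul' R B ∘ₗ TensorProduct.map (LinearMap.mul' R B ∘ₗ TensorProduct.map f g) h
      = (LinearMap.mul' R B ∘ₗ TensorProduct.map f (LinearMap.mul' R B ∘ₗ TensorProduct.map g h))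
        ∘ₗ (TensorProduct.assoc R H H H).toLinearMap := by
  apply TensorProduct.ext_threefold
  intro x y z
  simp [mul_assoc]

lemma coas : (TensorProduct.assoc R H H H).toLinearMap ∘ₗ
      TensorProduct.map (comul (R := R)) LinearMap.id ∘ₗ comul
    = TensorProduct.map LinearMap.id comul ∘ₗ comul :=
  Coalgebra.coassoc (R := R)

lemma myconv_assoc (f g h : H →ₗ[R] B) :
    myconv (myconv f g) h = myconv f (myconv g h) := by
  unfold myconv
  have e1 : TensorProduct.map ((LinearMap.mul' R B ∘ₗ TensorProduct.map f g) ∘ₗ comul) h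
      = TensorProduct.map (LinearMap.mul' R B ∘ₗ TensorProduct.map f g) h
        ∘ₗ TensorProduct.map comul LinearMap.id := by
    rw [← TensorProduct.map_comp, LinearMap.comp_id]
  have e2 : TensorProduct.map f ((LinearMap.mul' R B ∘ₗ TensorProduct.map g h) ∘ₗ comul)
      = TensorProduct.map f (LinearMap.mul' R B ∘ₗ TensorProduct.map g h)
        ∘ₗ TensorProduct.map LinearMap.id comul := by
    rw [← TensorProduct.map_comp, LinearMap.comp_id]
  rw [← LinearMap.comp_assoc (comul) (TensorProduct.map f g) (LinearMap.mul' R B), e1,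
    ← LinearMap.comp_assoc (comul) (TensorProduct.map g h) (LinearMap.mul' R B), e2]
  apply LinearMap.ext; intro x
  have h1 := LinearMap.congr_fun (pure_assoc f g h)
    (TensorProduct.map comul LinearMap.id (comul x))
  have h2 := LinearMap.congr_fun (coas (R := R) (H := H)) x
  simp only [LinearMap.comp_apply, LinearEquiv.coe_coe] at h1 h2 ⊢
  rw [h1, h2]

lemma myunit_conv (f : H →ₗ[R] B) : myconv myunit f = f := by
  unfold myconv myunit
  have e1 : TensorProduct.map (Algebra.linearMap R B ∘ₗ counit (R := R) (A := H)) f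
      = TensorProduct.map (Algebra.linearMap R B) f
        ∘ₗ TensorProduct.map counit (LinearMap.id : H →ₗ[R] H) := by
    rw [← TensorProduct.map_comp, LinearMap.comp_id]
  rw [e1, LinearMap.comp_assoc]
  have e2 : TensorProduct.map (counit (R := R) (A := H)) (LinearMap.id : H →ₗ[R] H) ∘ₗ comul
      = TensorProduct.mk R R H 1 := Coalgebra.rTensor_counit_comp_comul
  rw [e2]
  apply LinearMap.ext; intro x
  simp [Algebra.smul_def]

lemma myconv_unit (f : H →ₗ[R] B) : myconv f myunit = f := by
  unfold myconv myunit
  have e1 : TensorProduct.map f (Algebra.linearMap R B ∘ₗ counit (R := R) (A := H))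
      = TensorProduct.map f (Algebra.linearMap R B)
        ∘ₗ TensorProduct.map (LinearMap.id : H →ₗ[R] H) counit := by
    rw [← TensorProduct.map_comp, LinearMap.comp_id]
  rw [e1, LinearMap.comp_assoc]
  have e2 : TensorProduct.map (LinearMap.id : H →ₗ[R] H) (counit (R := R) (A := H)) ∘ₗ comul
      = (TensorProduct.mk R H R).flip 1 := Coalgebra.lTensor_counit_comp_comul
  rw [e2]
  apply LinearMap.ext; intro x
  simp [Algebra.smul_def, Algebra.commutes]

/-- `x ⊗ y ↦ x * S y`. -/
noncomputable def mS : H ⊗[R] H →ₗ[R] H :=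
  LinearMap.mul' R H ∘ₗ TensorProduct.map LinearMap.id (antipode (R := R))

lemma mS_comp_comul : (mS : H ⊗[R] H →ₗ[R] H) ∘ₗ comul = Algebra.linearMap R H ∘ₗ counit := by
  have := HopfAlgebra.mul_antipode_lTensor_comul (R := R) (A := H)
  rw [← this]
  rfl

/-- `(x ⊗ n) ⊗ t ↦ (x * S t) ⊗ n`. -/
noncomputable def PhiB : (H ⊗[R] H) ⊗[R] H →ₗ[R] H ⊗[R] H :=
  (TensorProduct.comm R H H).toLinearMap ∘ₗ
    TensorProduct.map LinearMap.id mS ∘ₗ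
    (TensorProduct.assoc R H H H).toLinearMap ∘ₗ
    TensorProduct.map (TensorProduct.comm R H H).toLinearMap LinearMap.id

/-- `Ψ2 : (H ⊗ (H ⊗ H)) ⊗ H → H ⊗ H`, `(x ⊗ (y ⊗ z)) ⊗ t ↦ (x S t) ⊗ (y S z)`. -/
noncomputable def Psi2 : (H ⊗[R] (H ⊗[R] H)) ⊗[R] H →ₗ[R] H ⊗[R] H :=
  PhiB ∘ₗ TensorProduct.map (TensorProduct.map LinearMap.id mS) LinearMap.id

lemma L2 :
    (LinearMap.mul' R (H ⊗[R] H)) ∘ₗ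
      TensorProduct.map LinearMap.id
        ((TensorProduct.comm R H H).toLinearMap ∘ₗ
          TensorProduct.map (antipode (R := R)) (antipode (R := R))) ∘ₗ
      (TensorProduct.assoc R (H ⊗[R] H) H H).toLinearMap
    = (Psi2 : (H ⊗[R] (H ⊗[R] H)) ⊗[R] H →ₗ[R] H ⊗[R] H) ∘ₗ
        TensorProduct.map (TensorProduct.assoc R H H H).toLinearMap LinearMap.id := by
  apply TensorProduct.ext_fourfold
  intro x y z t
  simp [Psi2, PhiB, mS, Algebra.TensorProduct.tmul_mul_tmul]

lemma map_fst_apply {R : Type*} [CommSemiring R] {M N P Q : Type*}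
    [AddCommMonoid M] [AddCommMonoid N] [AddCommMonoid P] [AddCommMonoid Q]
    [Module R M] [Module R N] [Module R P] [Module R Q]
    (F : N →ₗ[R] P) (G : M →ₗ[R] N) (u : M ⊗[R] Q) :
    TensorProduct.map F LinearMap.id (TensorProduct.map G LinearMap.id u)
      = TensorProduct.map (F ∘ₗ G) LinearMap.id u := by
  rw [← LinearMap.comp_apply, ← TensorProduct.map_comp, LinearMap.comp_id]

lemma kappa_eq : TensorProduct.map LinearMap.id (mS : H ⊗[R] H →ₗ[R] H) ∘ₗ
      TensorProduct.map LinearMap.id comul ∘ₗ comul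
    = TensorProduct.map (LinearMap.id : H →ₗ[R] H) (Algebra.linearMap R H) ∘ₗ
        (TensorProduct.mk R H R).flip 1 := by
  rw [← LinearMap.comp_assoc, ← TensorProduct.map_comp, LinearMap.id_comp, mS_comp_comul]
  have hsplit : TensorProduct.map (LinearMap.id : H →ₗ[R] H) (Algebra.linearMap R H ∘ₗ counit)
      = TensorProduct.map LinearMap.id (Algebra.linearMap R H) ∘ₗ
        TensorProduct.map (LinearMap.id : H →ₗ[R] H) (counit (R := R) (A := H)) := by
    rw [← TensorProduct.map_comp, LinearMap.id_comp]
  rw [hsplit, LinearMap.comp_assoc]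
  congr 1
  exact Coalgebra.lTensor_counit_comp_comul

lemma L3 : (PhiB : (H ⊗[R] H) ⊗[R] H →ₗ[R] H ⊗[R] H) ∘ₗ
      TensorProduct.map (TensorProduct.map (LinearMap.id : H →ₗ[R] H) (Algebra.linearMap R H) ∘ₗ
        (TensorProduct.mk R H R).flip 1) LinearMap.id
    = (TensorProduct.mk R H H).flip 1 ∘ₗ mS := by
  apply TensorProduct.ext'
  intro x t
  simp [PhiB, mS]

lemma claimB :
    myconv (comul (R := R) (A := H))
        ((TensorProduct.comm R H H).toLinearMap ∘ₗ
          TensorProduct.map (antipode (R := R)) (antipode (R := R)) ∘ₗ comul)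
    = (myunit : H →ₗ[R] H ⊗[R] H) := by
  unfold myconv myunit
  have h1 : TensorProduct.map (comul (R := R) (A := H))
        ((TensorProduct.comm R H H).toLinearMap ∘ₗ
          TensorProduct.map (antipode (R := R)) (antipode (R := R)) ∘ₗ comul)
      = TensorProduct.map LinearMap.id
          ((TensorProduct.comm R H H).toLinearMap ∘ₗ
            TensorProduct.map (antipode (R := R)) (antipode (R := R))) ∘ₗ
        TensorProduct.map comul comul := by
    rw [← TensorProduct.map_comp, LinearMap.id_comp, LinearMap.comp_assoc]
  have hΔΔ : TensorProduct.map (comul (R := R) (A := H)) (comul (R := R) (A := H))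
      = TensorProduct.map comul LinearMap.id ∘ₗ TensorProduct.map LinearMap.id comul := by
    rw [← TensorProduct.map_comp, LinearMap.id_comp, LinearMap.comp_id]
  have h3 : TensorProduct.map (comul (R := R) (A := H)) (LinearMap.id : H ⊗[R] H →ₗ[R] H ⊗[R] H)
        ∘ₗ (TensorProduct.assoc R H H H).toLinearMap
      = (TensorProduct.assoc R (H ⊗[R] H) H H).toLinearMap ∘ₗ
          TensorProduct.map (TensorProduct.map comul LinearMap.id) LinearMap.id := by
    have := TensorProduct.map_map_comp_assoc_eq (R := R)
      (comul (R := R) (A := H)) (LinearMap.id : H →ₗ[R] H) (LinearMap.id : H →ₗ[R] H)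
    rw [TensorProduct.map_id] at this
    exact this
  apply LinearMap.ext
  intro x
  simp only [LinearMap.comp_apply]
  rw [h1]
  simp only [LinearMap.comp_apply]
  rw [hΔΔ]
  simp only [LinearMap.comp_apply]
  have c2 := LinearMap.congr_fun (coas (R := R) (H := H)).symm x
  simp only [LinearMap.comp_apply] at c2
  rw [c2]
  have c3 := LinearMap.congr_fun h3
    ((TensorProduct.map (comul (R := R) (A := H)) LinearMap.id) (comul x))
  simp only [LinearMap.comp_apply] at c3
  rw [c3]
  have c4 := LinearMap.congr_fun (L2 (R := R) (H := H))
    ((TensorProduct.map (TensorProduct.map (comul (R := R) (A := H)) LinearMap.id) LinearMap.id)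
      ((TensorProduct.map (comul (R := R) (A := H)) LinearMap.id) (comul x)))
  simp only [LinearMap.comp_apply] at c4
  rw [c4]
  rw [map_fst_apply, map_fst_apply]
  rw [LinearMap.comp_assoc, coas]
  show PhiB ((TensorProduct.map (TensorProduct.map LinearMap.id mS) LinearMap.id)
    ((TensorProduct.map (TensorProduct.map LinearMap.id comul ∘ₗ comul) LinearMap.id) (comul x)))
    = (Algebra.linearMap R (H ⊗[R] H) ∘ₗ counit) x
  rw [map_fst_apply, kappa_eq]
  have c5 := LinearMap.congr_fun (L3 (R := R) (H := H)) (comul x)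
  simp only [LinearMap.comp_apply] at c5
  rw [c5]
  have c6 := LinearMap.congr_fun (mS_comp_comul (R := R) (H := H)) x
  simp only [LinearMap.comp_apply] at c6
  rw [c6]
  simp [Algebra.TensorProduct.algebraMap_apply, Algebra.TensorProduct.one_def]

lemma claimA :
    myconv (comul (R := R) (A := H) ∘ₗ antipode (R := R)) comul
    = (myunit : H →ₗ[R] H ⊗[R] H) := by
  unfold myconv myunit
  have e1 : TensorProduct.map (comul (R := R) (A := H) ∘ₗ antipode (R := R)) comul
      = TensorProduct.map (comul (R := R) (A := H)) (comul (R := R) (A := H))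
        ∘ₗ TensorProduct.map (antipode (R := R) (A := H)) (LinearMap.id : H →ₗ[R] H) := by
    rw [← TensorProduct.map_comp, LinearMap.comp_id]
  have e2 : LinearMap.mul' R (H ⊗[R] H) ∘ₗ
      TensorProduct.map (comul (R := R) (A := H)) (comul (R := R) (A := H))
      = comul ∘ₗ LinearMap.mul' R H := by
    apply TensorProduct.ext'
    intro x y
    simp
  rw [e1]
  apply LinearMap.ext
  intro x
  simp only [LinearMap.comp_apply]
  have c1 := LinearMap.congr_fun e2
    (TensorProduct.map (antipode (R := R) (A := H)) (LinearMap.id : H →ₗ[R] H) (comul x))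
  simp only [LinearMap.comp_apply] at c1
  rw [c1]
  have c2 := HopfAlgebra.mul_antipode_rTensor_comul_apply (R := R) (a := x)
  have : (antipode (R := R)).rTensor H (comul x)
      = TensorProduct.map (antipode (R := R) (A := H)) (LinearMap.id : H →ₗ[R] H) (comul x) := rfl
  rw [this] at c2
  rw [c2]
  simp

lemma comul_antipode_comp :
    comul (R := R) (A := H) ∘ₗ antipode (R := R)
      = (TensorProduct.comm R H H).toLinearMap ∘ₗ
          TensorProduct.map (antipode (R := R)) (antipode (R := R)) ∘ₗ comul := by
  calc comul (R := R) (A := H) ∘ₗ antipode (R := R)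
      = myconv (comul (R := R) (A := H) ∘ₗ antipode (R := R)) myunit := (myconv_unit _).symm
    _ = myconv (comul (R := R) (A := H) ∘ₗ antipode (R := R))
          (myconv comul ((TensorProduct.comm R H H).toLinearMap ∘ₗ
            TensorProduct.map (antipode (R := R)) (antipode (R := R)) ∘ₗ comul)) := by
        rw [claimB]
    _ = myconv (myconv (comul (R := R) (A := H) ∘ₗ antipode (R := R)) comul)
          ((TensorProduct.comm R H H).toLinearMap ∘ₗ
            TensorProduct.map (antipode (R := R)) (antipode (R := R)) ∘ₗ comul) :=
        (myconv_assoc _ _ _).symm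
    _ = myconv myunit ((TensorProduct.comm R H H).toLinearMap ∘ₗ
          TensorProduct.map (antipode (R := R)) (antipode (R := R)) ∘ₗ comul) := by rw [claimA]
    _ = _ := myunit_conv _

lemma claimA_R :
    myconv (counit (R := R) (A := H) ∘ₗ antipode (R := R)) counit = (myunit : H →ₗ[R] R) := by
  unfold myconv myunit
  have e1 : TensorProduct.map (counit (R := R) (A := H) ∘ₗ antipode (R := R))
        (counit (R := R) (A := H))
      = TensorProduct.map counit counit
        ∘ₗ TensorProduct.map (antipode (R := R) (A := H)) (LinearMap.id : H →ₗ[R] H) := by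
    rw [← TensorProduct.map_comp, LinearMap.comp_id]
  have e2 : LinearMap.mul' R R ∘ₗ
      TensorProduct.map (counit (R := R) (A := H)) (counit (R := R) (A := H))
      = counit ∘ₗ LinearMap.mul' R H := by
    apply TensorProduct.ext'
    intro x y
    simp
  rw [e1]
  apply LinearMap.ext
  intro x
  simp only [LinearMap.comp_apply]
  have c1 := LinearMap.congr_fun e2
    (TensorProduct.map (antipode (R := R) (A := H)) (LinearMap.id : H →ₗ[R] H) (comul x))
  simp only [LinearMap.comp_apply] at c1
  rw [c1]
  have c2 := HopfAlgebra.mul_antipode_rTensor_comul_apply (R := R) (a := x)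
  have : (antipode (R := R)).rTensor H (comul x)
      = TensorProduct.map (antipode (R := R) (A := H)) (LinearMap.id : H →ₗ[R] H) (comul x) := rfl
  rw [this] at c2
  rw [c2]
  simp

lemma counit_antipode_comp :
    counit (R := R) (A := H) ∘ₗ antipode (R := R) = counit := by
  have hu : (myunit : H →ₗ[R] R) = counit := by
    apply LinearMap.ext
    intro x
    simp [myunit]
  calc counit (R := R) (A := H) ∘ₗ antipode (R := R)
      = myconv (counit (R := R) (A := H) ∘ₗ antipode (R := R)) myunit := (myconv_unit _).symm
    _ = myconv (counit (R := R) (A := H) ∘ₗ antipode (R := R)) counit := by rw [hu]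
    _ = myunit := claimA_R
    _ = counit := hu

end ConvAux
/-- The `k`-linear map `h ↦ h • a` associated to a linear action of `H` on `A`. -/
def actL (k H A : Type*) [CommSemiring k] [Semiring H] [Module k H]
    [AddCommMonoid A] [Module k A] [Module H A] [IsScalarTower k H A] (a : A) :
    H →ₗ[k] A where
  toFun h := h • a
  map_add' h h' := add_smul h h' a
  map_smul' c h := by simp [smul_assoc]

/-- The map `θ : A → Hom_k(C, A')`, `θ_a(c) = π(S(c) • a)`, for a subcoalgebra
`C ⊆ H`. -/
noncomputable def thetaMap {k H A A' : Type*} [Field k] [Ring H] [HopfAlgebra k H]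
    [Ring A] [Algebra k A] [Module H A] [IsScalarTower k H A]
    [Ring A'] [Algebra k A'] (π : A →ₐ[k] A') (C : Submodule k H) (a : A) :
    C →ₗ[k] A' :=
  π.toLinearMap ∘ₗ actL k H A a ∘ₗ HopfAlgebra.antipode (R := k) ∘ₗ C.subtype

/-- Convolution on `Hom_k(C, A')` with respect to the opposite comultiplication of the
subcoalgebra `C` (with structure map `comulC`): `(ξ × η)(c) = ∑ ξ(c₂) η(c₁)`. -/
noncomputable def convCop {k A' : Type*} [Field k] [Ring A'] [Algebra k A']
    {C : Type*} [AddCommGroup C] [Module k C]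
    (comulC : C →ₗ[k] C ⊗[k] C) (ξ η : C →ₗ[k] A') : C →ₗ[k] A' :=
  LinearMap.mul' k A' ∘ₗ TensorProduct.map ξ η ∘ₗ
    (TensorProduct.comm k C C).toLinearMap ∘ₗ comulC

lemma actL_apply {k H A : Type*} [CommSemiring k] [Semiring H] [Module k H]
    [AddCommMonoid A] [Module k A] [Module H A] [IsScalarTower k H A] (a : A) (h : H) :
    actL k H A a h = h • a := rfl

lemma thetaMap_apply {k H A A' : Type*} [Field k] [Ring H] [HopfAlgebra k H]
    [Ring A] [Algebra k A] [Module H A] [IsScalarTower k H A]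
    [Ring A'] [Algebra k A'] (π : A →ₐ[k] A') (C : Submodule k H) (a : A) (c : C) :
    thetaMap π C a c = π (HopfAlgebra.antipode (R := k) (C.subtype c) • a) := rfl

/-- For an `H`-module algebra `A`, a subcoalgebra `C` of `H`, a two-sided ideal `I` of
`A` and a surjection `π : A → A'` with kernel `I`, the map `θ_a(c) = π(S(c) • a)` is a
homomorphism of unital algebras into `[C^cop, A']` with kernel
`{a | S(C) • a ⊆ I}`. -/
theorem theta_is_algebra_hom
    {k H A A' : Type*} [Field k] [Ring H] [HopfAlgebra k H]
    [Ring A] [Algebra k A] [Module H A] [IsScalarTower k H A]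
    [Ring A'] [Algebra k A']
    (hmul : ∀ (h : H) (a b : A), h • (a * b) =
      LinearMap.mul' k A (TensorProduct.map (actL k H A a) (actL k H A b)
        (Coalgebra.comul (R := k) h)))
    (hone : ∀ h : H, h • (1 : A) = Coalgebra.counit (R := k) h • (1 : A))
    (C : Submodule k H) (comulC : C →ₗ[k] C ⊗[k] C)
    (hcomulC : (TensorProduct.map C.subtype C.subtype) ∘ₗ comulC =
      Coalgebra.comul (R := k) ∘ₗ C.subtype)
    (I : TwoSidedIdeal A) (π : A →ₐ[k] A') (hπ : Function.Surjective π)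
    (hker : ∀ a : A, π a = 0 ↔ a ∈ I) :
    (∀ a b : A, thetaMap π C (a * b) = convCop comulC (thetaMap π C a) (thetaMap π C b)) ∧
    (thetaMap π C (1 : A) =
      (Algebra.linearMap k A') ∘ₗ Coalgebra.counit (R := k) ∘ₗ C.subtype) ∧
    (∀ a : A, thetaMap π C a = 0 ↔
      ∀ c ∈ C, HopfAlgebra.antipode (R := k) c • a ∈ I) := by
  refine ⟨?_, ?_, ?_⟩
  · intro a b
    apply LinearMap.ext
    intro c
    rw [thetaMap_apply, hmul]
    have hcm := LinearMap.congr_fun (comul_antipode_comp (R := k) (H := H)) (C.subtype c)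
    simp only [LinearMap.comp_apply] at hcm
    rw [hcm]
    have hc := LinearMap.congr_fun hcomulC c
    simp only [LinearMap.comp_apply] at hc
    rw [← hc]
    show _ = LinearMap.mul' k A' (TensorProduct.map (thetaMap π C a) (thetaMap π C b)
      ((TensorProduct.comm k C C) (comulC c)))
    generalize comulC c = t
    induction t using TensorProduct.induction_on with
    | zero => simp
    | tmul c₁ c₂ =>
        simp [thetaMap_apply, actL_apply, Algebra.TensorProduct.tmul_mul_tmul, map_mul]
    | add u v hu hv =>
        simp only [map_add, LinearEquiv.map_add]
        rw [hu, hv]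
  · apply LinearMap.ext
    intro c
    rw [thetaMap_apply, hone]
    have hε := LinearMap.congr_fun (counit_antipode_comp (R := k) (H := H)) (C.subtype c)
    simp only [LinearMap.comp_apply, Submodule.subtype_apply] at hε
    simp [hε, Algebra.algebraMap_eq_smul_one]
  · intro a
    constructor
    · intro h c hc
      have := LinearMap.congr_fun h ⟨c, hc⟩
      rw [thetaMap_apply] at this
      exact (hker _).mp this
    · intro h
      apply LinearMap.ext
      intro c
      rw [thetaMap_apply]
      simpa using (hker _).mpr (h (C.subtype c) c.2)
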